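/- Consider a strongly-connected mean-payoff bidding game G = (V, E, w) with a vertex u such that W(u) ≤ 0, with the game starting at u with initial energy level k_I ∈ ℕ. Let w_M = max_{v ∈ V} |W(v)|, let b_M = max_{v ∈ V} (W(v⁺) − W(v⁻))/2, and suppose N ∈ ℕ and Min's initial budget B satisfy B > (k_I + b_M + w_M)/N. Let f_m be the Min strategy that at every vertex v bids (W(v⁺) − W(v⁻))/(2N) and moves to v⁻ upon winning. Then for every Max strategy f_M and every finite outcome π of (f_m, f_M): if the energy level at the end of π is k = k_I + E(π), then Min's budget at the end of π is at least (k + b_M)/N. In particular, f_m is legal (Min can always afford his bid), and if the energy level never reaches 0 then it stays bounded by N − b_M. -/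

import Mathlib

open scoped Classical

/-! ### Bidding games: the basic model -/

/-- One round of a bidding game: the vertex the token was moved to, the winning bid,
and whether Player 1 won the bidding. -/
structure BidRound (V : Type) where
  dest : V
  bid : ℝ
  p1Won : Bool

/-- A history: the initial vertex together with the list of rounds played so far. -/
structure Hist (V : Type) where
  init : V
  rounds : List (BidRound V)

/-- The vertex currently occupied by the token. -/
def Hist.cur {V : Type} (h : Hist V) : V :=
  h.rounds.getLast?.elim h.init BidRound.dest

/-- The net payment of Player 1 so far (bids paid upon winning minus bids received). -/
def Hist.pay1 {V : Type} (h : Hist V) : ℝ :=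
  (h.rounds.map (fun r => if r.p1Won then r.bid else -r.bid)).sum

/-- The net payment of Player 2 so far. -/
def Hist.pay2 {V : Type} (h : Hist V) : ℝ := -h.pay1

/-- The sum of the weights of all vertices visited so far (including the current one). -/
def Hist.energyAll {V : Type} (w : V → ℤ) (h : Hist V) : ℤ :=
  w h.init + (h.rounds.map (fun r => w r.dest)).sum

/-- A strategy: maps a history to a bid and the vertex to move to upon winning. -/
def Strat (V : Type) := Hist V → ℝ × V

/-- A tie-breaking mechanism: decides at each history whether Player 1 wins a tie. -/
def TieBreak (V : Type) := Hist V → Bool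

/-- A bidding game: a finite directed graph in which every vertex has an outgoing edge. -/
structure BiddingGame (V : Type) [Fintype V] where
  E : V → V → Prop
  total : ∀ v, ∃ u, E v u

/-- One round of play: both players bid; the higher bidder (Player 1 upon a tie won by
the tie-breaking mechanism) pays his bid to the other player and moves the token. -/
noncomputable def extend {V : Type} (tb : TieBreak V) (f1 f2 : Strat V) (h : Hist V) : Hist V :=
  if (f2 h).1 < (f1 h).1 ∨ ((f1 h).1 = (f2 h).1 ∧ tb h = true) then
    ⟨h.init, h.rounds ++ [⟨(f1 h).2, (f1 h).1, true⟩]⟩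
  else
    ⟨h.init, h.rounds ++ [⟨(f2 h).2, (f2 h).1, false⟩]⟩

/-- The history after `n` rounds, starting at `v0`. -/
noncomputable def play {V : Type} (tb : TieBreak V) (f1 f2 : Strat V) (v0 : V) : ℕ → Hist V
  | 0 => ⟨v0, []⟩
  | n + 1 => extend tb f1 f2 (play tb f1 f2 v0 n)

/-- The vertex occupied after `n` rounds. -/
noncomputable def visit {V : Type} (tb : TieBreak V) (f1 f2 : Strat V) (v0 : V) (n : ℕ) : V :=
  (play tb f1 f2 v0 n).cur

/-- The energy (sum of weights) of the prefix of length `n` of the outcome. -/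
noncomputable def energy {V : Type} (w : V → ℤ) (tb : TieBreak V) (f1 f2 : Strat V) (v0 : V)
    (n : ℕ) : ℤ :=
  ∑ i ∈ Finset.range n, w (visit tb f1 f2 v0 i)

/-- Player 1's strategy is legal w.r.t. the initial budget `B`: along any play, his bids
are nonnegative, never exceed his current budget, and his moves follow edges. -/
def Legal1 {V : Type} [Fintype V] (G : BiddingGame V) (f1 : Strat V) (B : ℝ) : Prop :=
  ∀ (tb : TieBreak V) (f2 : Strat V) (v0 : V) (n : ℕ),
    0 ≤ (f1 (play tb f1 f2 v0 n)).1 ∧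
    (f1 (play tb f1 f2 v0 n)).1 ≤ B - (play tb f1 f2 v0 n).pay1 ∧
    G.E (play tb f1 f2 v0 n).cur (f1 (play tb f1 f2 v0 n)).2

/-- Player 2's strategy is legal w.r.t. the initial budget `B`. -/
def Legal2 {V : Type} [Fintype V] (G : BiddingGame V) (f2 : Strat V) (B : ℝ) : Prop :=
  ∀ (tb : TieBreak V) (f1 : Strat V) (v0 : V) (n : ℕ),
    0 ≤ (f2 (play tb f1 f2 v0 n)).1 ∧
    (f2 (play tb f1 f2 v0 n)).1 ≤ B - (play tb f1 f2 v0 n).pay2 ∧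
    G.E (play tb f1 f2 v0 n).cur (f2 (play tb f1 f2 v0 n)).2

/-- A memoryless strategy: its action depends only on the current vertex and the
player's current budget (equivalently, the net payments so far). -/
def Memoryless {V : Type} (f : Strat V) : Prop :=
  ∀ h h' : Hist V, h.cur = h'.cur → h.pay1 = h'.pay1 → f h = f h'

/-- A memoryless strategy in a mean-payoff game: its action depends only on the current
vertex, the player's current budget, and the current energy level. -/
def MemorylessE {V : Type} (w : V → ℤ) (f : Strat V) : Prop :=
  ∀ h h' : Hist V, h.cur = h'.cur → h.pay1 = h'.pay1 →
    h.energyAll w = h'.energyAll w → f h = f h'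

/-- A constant-memory strategy for Player 2 (Max): the action depends only on the current
vertex, Player 2's current budget, the current energy level, and a memory state ranging
over a finite set (of size independent of the history), updated round by round. -/
def FiniteMemory2 {V : Type} (w : V → ℤ) (f : Strat V) (B : ℝ) : Prop :=
  ∃ (M : Type) (_ : Fintype M) (m0 : M) (upd : M → BidRound V → M)
    (act : V → ℝ → ℤ → M → ℝ × V),
    ∀ h : Hist V, f h = act h.cur (B - h.pay2) (h.energyAll w) (h.rounds.foldl upd m0)

/-- Strong connectivity of the arena. -/
def StronglyConnected {V : Type} [Fintype V] (G : BiddingGame V) : Prop :=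
  ∀ v u : V, Relation.ReflTransGen G.E v u

/-! ### Richman games -/

/-- The successors of `v`. -/
noncomputable def BiddingGame.adj {V : Type} [Fintype V] (G : BiddingGame V) (v : V) :
    Finset V :=
  Finset.univ.filter (fun u => G.E v u)

lemma BiddingGame.adj_nonempty {V : Type} [Fintype V] (G : BiddingGame V) (v : V) :
    (G.adj v).Nonempty := by
  obtain ⟨u, hu⟩ := G.total v
  exact ⟨u, by simpa [BiddingGame.adj] using hu⟩

/-- The Richman function `R(v, i)`. -/
noncomputable def Rfun {V : Type} [Fintype V] (G : BiddingGame V) (vR vS : V) :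
    ℕ → V → ℝ
  | 0, v => if v = vR then 0 else 1
  | i + 1, v =>
      if v = vR then 0
      else if v = vS then 1
      else ((G.adj v).sup' (G.adj_nonempty v) (Rfun G vR vS i) +
            (G.adj v).inf' (G.adj_nonempty v) (Rfun G vR vS i)) / 2

/-- The limit Richman function `R(v) = lim_i R(v, i)`; since `i ↦ R(v, i)` is
nonincreasing, the limit equals the infimum. -/
noncomputable def Rlim {V : Type} [Fintype V] (G : BiddingGame V) (vR vS : V)
    (v : V) : ℝ :=
  ⨅ i : ℕ, Rfun G vR vS i v

/-- Player 1 wins an outcome of a Richman game: `vR` is reached, and `vS` is not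
reached before that (the game ends once a target is reached). -/
def Win1Richman {V : Type} (tb : TieBreak V) (f1 f2 : Strat V) (v0 vR vS : V) : Prop :=
  ∃ n, visit tb f1 f2 v0 n = vR ∧ ∀ m < n, visit tb f1 f2 v0 m ≠ vS

/-- Player 2 wins an outcome of a Richman game: `vS` is reached first, or no target is
ever reached. -/
def Win2Richman {V : Type} (tb : TieBreak V) (f1 f2 : Strat V) (v0 vR vS : V) : Prop :=
  (∃ n, visit tb f1 f2 v0 n = vS ∧ ∀ m < n, visit tb f1 f2 v0 m ≠ vR) ∨
  (∀ n, visit tb f1 f2 v0 n ≠ vR ∧ visit tb f1 f2 v0 n ≠ vS)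

/-- Player 1 has a winning strategy in the Richman game from `v0` with budget `B`. -/
def Win1RichmanFrom {V : Type} [Fintype V] (G : BiddingGame V) (vR vS v0 : V)
    (B : ℝ) : Prop :=
  ∀ tb : TieBreak V, ∃ f1 : Strat V, Legal1 G f1 B ∧
    ∀ f2 : Strat V, Legal2 G f2 (1 - B) → Win1Richman tb f1 f2 v0 vR vS

/-- Player 2 has a winning strategy in the Richman game from `v0` with budget `B`. -/
def Win2RichmanFrom {V : Type} [Fintype V] (G : BiddingGame V) (vR vS v0 : V)
    (B : ℝ) : Prop :=
  ∀ tb : TieBreak V, ∃ f2 : Strat V, Legal2 G f2 B ∧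
    ∀ f1 : Strat V, Legal1 G f1 (1 - B) → Win2Richman tb f1 f2 v0 vR vS

/-- `t` is a threshold budget at `v` in the Richman game. -/
def IsThreshRichman {V : Type} [Fintype V] (G : BiddingGame V) (vR vS v : V)
    (t : ℝ) : Prop :=
  (∀ B : ℝ, B ≤ 1 → t < B → Win1RichmanFrom G vR vS v B) ∧
  (∀ B : ℝ, B ≤ 1 → 1 - t < B → Win2RichmanFrom G vR vS v B)

/-! ### Richman games with target sets -/

def Win1RichmanSet {V : Type} (tb : TieBreak V) (f1 f2 : Strat V) (v0 : V)
    (R S : Set V) : Prop :=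
  ∃ n, visit tb f1 f2 v0 n ∈ R ∧ ∀ m < n, visit tb f1 f2 v0 m ∉ S

def Win2RichmanSet {V : Type} (tb : TieBreak V) (f1 f2 : Strat V) (v0 : V)
    (R S : Set V) : Prop :=
  (∃ n, visit tb f1 f2 v0 n ∈ S ∧ ∀ m < n, visit tb f1 f2 v0 m ∉ R) ∨
  (∀ n, visit tb f1 f2 v0 n ∉ R ∧ visit tb f1 f2 v0 n ∉ S)

/-- `t` is a threshold budget at `v` in the Richman game with target sets `R` and `S`. -/
def IsThreshRichmanSet {V : Type} [Fintype V] (G : BiddingGame V) (R S : Set V)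
    (v : V) (t : ℝ) : Prop :=
  (∀ B : ℝ, B ≤ 1 → t < B → ∀ tb : TieBreak V, ∃ f1 : Strat V, Legal1 G f1 B ∧
      ∀ f2 : Strat V, Legal2 G f2 (1 - B) → Win1RichmanSet tb f1 f2 v R S) ∧
  (∀ B : ℝ, B ≤ 1 → 1 - t < B → ∀ tb : TieBreak V, ∃ f2 : Strat V, Legal2 G f2 B ∧
      ∀ f1 : Strat V, Legal1 G f1 (1 - B) → Win2RichmanSet tb f1 f2 v R S)

/-! ### Reachability games -/

/-- `t` is a threshold budget at `v` in the reachability game with target set `T`. -/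
def IsThreshReach {V : Type} [Fintype V] (G : BiddingGame V) (T : Set V) (v : V)
    (t : ℝ) : Prop :=
  (∀ B : ℝ, B ≤ 1 → t < B → ∀ tb : TieBreak V, ∃ f1 : Strat V, Legal1 G f1 B ∧
      ∀ f2 : Strat V, Legal2 G f2 (1 - B) → ∃ n, visit tb f1 f2 v n ∈ T) ∧
  (∀ B : ℝ, B ≤ 1 → 1 - t < B → ∀ tb : TieBreak V, ∃ f2 : Strat V, Legal2 G f2 B ∧
      ∀ f1 : Strat V, Legal1 G f1 (1 - B) → ∀ n, visit tb f1 f2 v n ∉ T)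

/-! ### Parity games -/

/-- Player 1 wins an outcome of a parity game: the maximal parity index visited
infinitely often is odd. -/
def Win1Parity {V : Type} (p : V → ℕ) (tb : TieBreak V) (f1 f2 : Strat V)
    (v0 : V) : Prop :=
  Odd (sSup {k : ℕ | ∀ N : ℕ, ∃ n ≥ N, p (visit tb f1 f2 v0 n) = k})

def Win1ParityFrom {V : Type} [Fintype V] (G : BiddingGame V) (p : V → ℕ) (v0 : V)
    (B : ℝ) : Prop :=
  ∀ tb : TieBreak V, ∃ f1 : Strat V, Legal1 G f1 B ∧
    ∀ f2 : Strat V, Legal2 G f2 (1 - B) → Win1Parity p tb f1 f2 v0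

def Win2ParityFrom {V : Type} [Fintype V] (G : BiddingGame V) (p : V → ℕ) (v0 : V)
    (B : ℝ) : Prop :=
  ∀ tb : TieBreak V, ∃ f2 : Strat V, Legal2 G f2 B ∧
    ∀ f1 : Strat V, Legal1 G f1 (1 - B) → ¬ Win1Parity p tb f1 f2 v0

/-- `t` is a threshold budget at `v` in the parity game. -/
def IsThreshParity {V : Type} [Fintype V] (G : BiddingGame V) (p : V → ℕ) (v : V)
    (t : ℝ) : Prop :=
  (∀ B : ℝ, B ≤ 1 → t < B → Win1ParityFrom G p v B) ∧
  (∀ B : ℝ, B ≤ 1 → 1 - t < B → Win2ParityFrom G p v B)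

/-! ### Mean-payoff games (Min is Player 1, Max is Player 2) -/

/-- The mean-payoff value of the outcome. -/
noncomputable def mpval {V : Type} (w : V → ℤ) (tb : TieBreak V) (f1 f2 : Strat V)
    (v0 : V) : ℝ :=
  Filter.liminf (fun n : ℕ => (energy w tb f1 f2 v0 n : ℝ) / n) Filter.atTop

/-- Min can guarantee a nonpositive mean-payoff value from `v0` with budget `B`. -/
def MinWinsFrom {V : Type} [Fintype V] (G : BiddingGame V) (w : V → ℤ) (v0 : V)
    (B : ℝ) : Prop :=
  ∀ tb : TieBreak V, ∃ f1 : Strat V, Legal1 G f1 B ∧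
    ∀ f2 : Strat V, Legal2 G f2 (1 - B) → mpval w tb f1 f2 v0 ≤ 0

/-- Max can guarantee a strictly positive mean-payoff value from `v0` with budget `B`. -/
def MaxWinsFrom {V : Type} [Fintype V] (G : BiddingGame V) (w : V → ℤ) (v0 : V)
    (B : ℝ) : Prop :=
  ∀ tb : TieBreak V, ∃ f2 : Strat V, Legal2 G f2 B ∧
    ∀ f1 : Strat V, Legal1 G f1 (1 - B) → 0 < mpval w tb f1 f2 v0

/-- `t` is a threshold budget at `v` in the mean-payoff game. -/
def IsThreshMP {V : Type} [Fintype V] (G : BiddingGame V) (w : V → ℤ) (v : V)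
    (t : ℝ) : Prop :=
  (∀ B : ℝ, B ≤ 1 → t < B → MinWinsFrom G w v B) ∧
  (∀ B : ℝ, B ≤ 1 → 1 - t < B → MaxWinsFrom G w v B)

/-! ### The split graph `G^u` and the weighted Richman function -/

/-- Edges of `G^u`: `u` is split into `u_s = Sum.inl u` (keeping the outgoing edges of
`u`, with no incoming edges) and `u_t = Sum.inr ()` (receiving the edges into `u`, with
no outgoing edges). -/
def splitE {V : Type} [Fintype V] (G : BiddingGame V) (u : V) :
    V ⊕ Unit → V ⊕ Unit → Prop
  | Sum.inl v, Sum.inl x => G.E v x ∧ x ≠ u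
  | Sum.inl v, Sum.inr _ => G.E v u
  | Sum.inr _, _ => False

/-- The successors in `G^u` of a vertex `v ∈ V` (i.e. of `Sum.inl v`). -/
noncomputable def succu {V : Type} [Fintype V] (G : BiddingGame V) (u v : V) :
    Finset (V ⊕ Unit) :=
  Finset.univ.filter (fun y => splitE G u (Sum.inl v) y)

lemma succu_nonempty {V : Type} [Fintype V] (G : BiddingGame V) (u v : V) :
    (succu G u v).Nonempty := by
  obtain ⟨x, hx⟩ := G.total v
  by_cases hxu : x = u
  · refine ⟨Sum.inr (), ?_⟩
    simp only [succu, Finset.mem_filter, Finset.mem_univ, true_and]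
    exact show G.E v u from hxu ▸ hx
  · refine ⟨Sum.inl x, ?_⟩
    simp only [succu, Finset.mem_filter, Finset.mem_univ, true_and]
    exact show G.E v x ∧ x ≠ u from ⟨hx, hxu⟩

/-- `W(v⁺)`: the maximal value of `W` over the `G^u`-successors of `v`. -/
noncomputable def supWu {V : Type} [Fintype V] (G : BiddingGame V) (u : V)
    (W : V ⊕ Unit → ℝ) (v : V) : ℝ :=
  (succu G u v).sup' (succu_nonempty G u v) W

/-- `W(v⁻)`: the minimal value of `W` over the `G^u`-successors of `v`. -/
noncomputable def infWu {V : Type} [Fintype V] (G : BiddingGame V) (u : V)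
    (W : V ⊕ Unit → ℝ) (v : V) : ℝ :=
  (succu G u v).inf' (succu_nonempty G u v) W

/-- `W` is a weighted Richman function for the weights `w`, split at `u`:
`W(u_t) = 0` and `W(v) = (W(v⁺) + W(v⁻))/2 + w(v)` for every `v ∈ V`
(`Sum.inl v` represents `v`, in particular `Sum.inl u` is `u_s`). -/
def IsWRichman {V : Type} [Fintype V] (G : BiddingGame V) (w : V → ℝ) (u : V)
    (W : V ⊕ Unit → ℝ) : Prop :=
  W (Sum.inr ()) = 0 ∧
  ∀ v : V, W (Sum.inl v) = (supWu G u W v + infWu G u W v) / 2 + w v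

/-- Projection of `G^u`-vertices back to vertices of `G`. -/
def projU {V : Type} (u : V) : V ⊕ Unit → V := Sum.elim id (fun _ => u)

/-- `w_M`: the maximal absolute value of `W` over `V`. -/
noncomputable def wMax {V : Type} [Fintype V] (W : V ⊕ Unit → ℝ) (u : V) : ℝ :=
  Finset.univ.sup' ⟨u, Finset.mem_univ u⟩ (fun v : V => |W (Sum.inl v)|)

/-- `b_M`: the maximal value of the bid `(W(v⁺) − W(v⁻))/2` over `V`. -/
noncomputable def bMax {V : Type} [Fintype V] (G : BiddingGame V) (u : V)
    (W : V ⊕ Unit → ℝ) : ℝ :=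
  Finset.univ.sup' ⟨u, Finset.mem_univ u⟩
    (fun v : V => (supWu G u W v - infWu G u W v) / 2)

/-!
Write `b(v) = (W(v⁺) - W(v⁻))/2` for Min's scaled bid. The quantity
`E(π) + W(current vertex) + N · (Min's net payment)` never increases along a play. When Min wins
at `v`, he pays `b(v)/N` and moves to `v⁻`, and the Richman equation
`W(v) = (W(v⁺) + W(v⁻))/2 + w(v)` gives `w(v) + W(v⁻) - W(v) = -b(v)`; when Max wins, he receives
at least `b(v)/N` while `w(v) + W(v') - W(v) ≤ b(v)`. A move into `u` lands on `u_s` in `G`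
but on `u_t` in `G^u`, which is harmless because `W(u_s) ≤ 0 = W(u_t)`. Starting from `W(u) ≤ 0`
with `N · B > k_I + b_M + w_M`, and using `|W| ≤ w_M`, this yields Min's budget bound; the
other two claims follow from `b(v) ≤ b_M` and from Min's budget never exceeding `1`.
-/

section PlayMechanics

variable {V : Type} (tb : TieBreak V) (f1 f2 : Strat V)

lemma extend_of_wins1 {h : Hist V}
    (hwin : (f2 h).1 < (f1 h).1 ∨ ((f1 h).1 = (f2 h).1 ∧ tb h = true)) :
    (extend tb f1 f2 h).cur = (f1 h).2 ∧ (extend tb f1 f2 h).pay1 = h.pay1 + (f1 h).1 := by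
  simp [extend, hwin, Hist.cur, Hist.pay1]

lemma extend_of_not_wins1 {h : Hist V}
    (hwin : ¬((f2 h).1 < (f1 h).1 ∨ ((f1 h).1 = (f2 h).1 ∧ tb h = true))) :
    (extend tb f1 f2 h).cur = (f2 h).2 ∧ (extend tb f1 f2 h).pay1 = h.pay1 - (f2 h).1 := by
  simp [extend, hwin, Hist.cur, Hist.pay1, sub_eq_add_neg]

lemma energy_succ (w : V → ℤ) (v0 : V) (n : ℕ) :
    energy w tb f1 f2 v0 (n + 1) = energy w tb f1 f2 v0 n + w (visit tb f1 f2 v0 n) :=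
  Finset.sum_range_succ _ _

lemma sub_pay1_le_one_of_legal2 [Fintype V] {G : BiddingGame V} {B : ℝ}
    (hf2 : Legal2 G f2 (1 - B)) (v0 : V) (n : ℕ) :
    B - (play tb f1 f2 v0 n).pay1 ≤ 1 := by
  obtain ⟨hbid2_nonneg, hbid2_le, -⟩ := hf2 tb f1 v0 n
  simp only [Hist.pay2] at hbid2_le
  linarith

end PlayMechanics

lemma apply_projU_le {V : Type} {u : V} {W : V ⊕ Unit → ℝ}
    (hWu : W (Sum.inl u) ≤ W (Sum.inr ())) (y : V ⊕ Unit) :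
    W (Sum.inl (projU u y)) ≤ W y := by
  cases y with
  | inl x => rfl
  | inr _ => exact hWu

section WeightedRichman

variable {V : Type} [Fintype V] (G : BiddingGame V) (u : V) (W : V ⊕ Unit → ℝ)

lemma half_supWu_sub_infWu_le_bMax (v : V) :
    (supWu G u W v - infWu G u W v) / 2 ≤ bMax G u W :=
  Finset.le_sup' (fun v : V => (supWu G u W v - infWu G u W v) / 2) (Finset.mem_univ v)

lemma abs_le_wMax (v : V) : |W (Sum.inl v)| ≤ wMax W u :=
  Finset.le_sup' (fun v : V => |W (Sum.inl v)|) (Finset.mem_univ v)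

variable {G u W}

lemma le_supWu_of_E (hWu : W (Sum.inl u) ≤ W (Sum.inr ())) {v x : V} (hE : G.E v x) :
    W (Sum.inl x) ≤ supWu G u W v := by
  by_cases hxu : x = u
  · subst hxu
    exact hWu.trans (Finset.le_sup' W (Finset.mem_filter.mpr ⟨Finset.mem_univ _, hE⟩))
  · exact Finset.le_sup' W (Finset.mem_filter.mpr ⟨Finset.mem_univ _, hE, hxu⟩)

lemma potential_extend_le {w : V → ℝ} (hW : IsWRichman G w u W)
    (hWu : W (Sum.inl u) ≤ 0) {N : ℝ} (hN : 0 < N) (tb : TieBreak V) {f1 f2 : Strat V}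
    (hbid : ∀ h : Hist V, (f1 h).1 = (supWu G u W h.cur - infWu G u W h.cur) / (2 * N))
    (hmove : ∀ h : Hist V, ∃ y ∈ succu G u h.cur,
      W y = infWu G u W h.cur ∧ projU u y = (f1 h).2)
    {h : Hist V} (hE2 : G.E h.cur (f2 h).2) :
    w h.cur + W (Sum.inl (extend tb f1 f2 h).cur) + N * (extend tb f1 f2 h).pay1
      ≤ W (Sum.inl h.cur) + N * h.pay1 := by
  have hWu' : W (Sum.inl u) ≤ W (Sum.inr ()) := hW.1 ▸ hWu
  have hrich := hW.2 h.cur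
  have hNbid : N * (f1 h).1 = (supWu G u W h.cur - infWu G u W h.cur) / 2 := by
    rw [hbid h]; field_simp
  by_cases hwin : (f2 h).1 < (f1 h).1 ∨ ((f1 h).1 = (f2 h).1 ∧ tb h = true)
  · obtain ⟨hcur, hpay⟩ := extend_of_wins1 tb f1 f2 hwin
    obtain ⟨y, -, hWy, hy⟩ := hmove h
    have hdest : W (Sum.inl (f1 h).2) ≤ infWu G u W h.cur :=
      hy ▸ hWy ▸ apply_projU_le hWu' y
    rw [hcur, hpay]
    linarith
  · obtain ⟨hcur, hpay⟩ := extend_of_not_wins1 tb f1 f2 hwin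
    have hbid_le : N * (f1 h).1 ≤ N * (f2 h).1 :=
      mul_le_mul_of_nonneg_left (not_lt.mp (not_or.mp hwin).1) hN.le
    have hdest := le_supWu_of_E hWu' hE2
    rw [hcur, hpay]
    linarith

end WeightedRichman

section Potential

variable {V : Type} [Fintype V] {G : BiddingGame V} {u : V} {W : V ⊕ Unit → ℝ}

noncomputable def minPotential (w : V → ℤ) (W : V ⊕ Unit → ℝ) (N : ℝ) (tb : TieBreak V)
    (f1 f2 : Strat V) (v0 : V) (n : ℕ) : ℝ :=
  energy w tb f1 f2 v0 n + W (Sum.inl (visit tb f1 f2 v0 n)) + N * (play tb f1 f2 v0 n).pay1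

variable {w : V → ℤ} (hW : IsWRichman G (fun x => (w x : ℝ)) u W) (hWu : W (Sum.inl u) ≤ 0)
  {N : ℝ} (hN : 0 < N) (tb : TieBreak V) {f1 f2 : Strat V}
  (hbid : ∀ h : Hist V, (f1 h).1 = (supWu G u W h.cur - infWu G u W h.cur) / (2 * N))
  (hmove : ∀ h : Hist V, ∃ y ∈ succu G u h.cur, W y = infWu G u W h.cur ∧ projU u y = (f1 h).2)
  {B₂ : ℝ} (hf2 : Legal2 G f2 B₂)
include hW hWu hN hbid hmove hf2

lemma minPotential_antitone (v0 : V) : Antitone (minPotential w W N tb f1 f2 v0) := by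
  refine antitone_nat_of_succ_le fun n => ?_
  have hstep := potential_extend_le hW hWu hN tb hbid hmove (hf2 tb f1 v0 n).2.2
  simp only [minPotential, energy_succ, visit, play, Int.cast_add] at hstep ⊢
  linarith

lemma minPotential_le (v0 : V) (n : ℕ) : minPotential w W N tb f1 f2 v0 n ≤ W (Sum.inl v0) :=
  (minPotential_antitone hW hWu hN tb hbid hmove hf2 v0 (Nat.zero_le n)).trans_eq
    (by simp [minPotential, energy, visit, play, Hist.cur, Hist.pay1])

end Potential

theorem mp_min_invariant_general
    {V : Type} [Fintype V] (G : BiddingGame V) (w : V → ℤ)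
    (u : V)
    (Wf : V ⊕ Unit → ℝ) (hW : IsWRichman G (fun x => (w x : ℝ)) u Wf)
    (hWu : Wf (Sum.inl u) ≤ 0)
    (kI : ℕ) (N : ℕ) (hN : 0 < N) (B : ℝ)
    (hB : ((kI : ℝ) + bMax G u Wf + wMax Wf u) / N < B)
    (f1 : Strat V)
    (hbid : ∀ h : Hist V,
      (f1 h).1 = (supWu G u Wf h.cur - infWu G u Wf h.cur) / (2 * N))
    (hmove : ∀ h : Hist V, ∃ y ∈ succu G u h.cur,
      Wf y = infWu G u Wf h.cur ∧ projU u y = (f1 h).2)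
    (f2 : Strat V) (hf2 : Legal2 G f2 (1 - B)) (tb : TieBreak V) :
    (∀ n : ℕ, ((kI : ℝ) + (energy w tb f1 f2 u n : ℝ) + bMax G u Wf) / N
        ≤ B - (play tb f1 f2 u n).pay1) ∧
    (∀ n : ℕ, 0 ≤ (kI : ℤ) + energy w tb f1 f2 u n →
        (f1 (play tb f1 f2 u n)).1 ≤ B - (play tb f1 f2 u n).pay1) ∧
    ((∀ m : ℕ, (kI : ℤ) + energy w tb f1 f2 u m ≠ 0) →
      ∀ n : ℕ, (kI : ℝ) + (energy w tb f1 f2 u n : ℝ) ≤ N - bMax G u Wf) := by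
  have hN' : (0 : ℝ) < N := by exact_mod_cast hN
  have hNB := (div_lt_iff₀ hN').mp hB
  have hbudget : ∀ n, (kI : ℝ) + energy w tb f1 f2 u n + bMax G u Wf
      ≤ N * (B - (play tb f1 f2 u n).pay1) := by
    intro n
    have hpot := minPotential_le hW hWu hN' tb hbid hmove hf2 u n
    have hW_ge := (abs_le.mp (abs_le_wMax u Wf (visit tb f1 f2 u n))).1
    simp only [minPotential] at hpot
    linarith
  refine ⟨fun n => (div_le_iff₀' hN').mpr (hbudget n), fun n hk => ?_, fun _ n => ?_⟩
  · have hk' : (0 : ℝ) ≤ kI + energy w tb f1 f2 u n := by exact_mod_cast hk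
    have hbM := half_supWu_sub_infWu_le_bMax G u Wf (play tb f1 f2 u n).cur
    rw [hbid, div_le_iff₀ (by positivity)]
    linarith [hbudget n]
  · have hle_one := sub_pay1_le_one_of_legal2 tb f1 f2 hf2 u n
    linarith [hbudget n, mul_le_of_le_one_right hN'.le hle_one]

/-- Suppose `W(u) ≤ 0`, the game starts at `u` with initial energy
level `kI`, and Min's initial budget `B` satisfies `B > (kI + b_M + w_M) / N`. Let `f1`
be the Min strategy that at every vertex `v` bids `(W(v⁺) - W(v⁻)) / (2N)` and moves to
`v⁻` upon winning. Then against every legal Max strategy: whenever the energy level is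
`k = kI + E(π)`, Min's current budget is at least `(k + b_M) / N`; in particular `f1`
is legal (Min can always afford his bid, the energy level being nonnegative), and if
the energy level never reaches `0`, it stays bounded by `N - b_M`. -/
theorem mp_min_invariant
    {V : Type} [Fintype V] (G : BiddingGame V) (w : V → ℤ)
    (hsc : StronglyConnected G) (u : V)
    (Wf : V ⊕ Unit → ℝ) (hW : IsWRichman G (fun x => (w x : ℝ)) u Wf)
    (hWu : Wf (Sum.inl u) ≤ 0)
    (kI : ℕ) (N : ℕ) (hN : 0 < N) (B : ℝ) (hB1 : B ≤ 1)
    (hB : ((kI : ℝ) + bMax G u Wf + wMax Wf u) / N < B)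
    (f1 : Strat V)
    (hbid : ∀ h : Hist V,
      (f1 h).1 = (supWu G u Wf h.cur - infWu G u Wf h.cur) / (2 * N))
    (hmove : ∀ h : Hist V, ∃ y ∈ succu G u h.cur,
      Wf y = infWu G u Wf h.cur ∧ projU u y = (f1 h).2)
    (f2 : Strat V) (hf2 : Legal2 G f2 (1 - B)) (tb : TieBreak V) :
    (∀ n : ℕ, ((kI : ℝ) + (energy w tb f1 f2 u n : ℝ) + bMax G u Wf) / N
        ≤ B - (play tb f1 f2 u n).pay1) ∧
    (∀ n : ℕ, 0 ≤ (kI : ℤ) + energy w tb f1 f2 u n →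
        (f1 (play tb f1 f2 u n)).1 ≤ B - (play tb f1 f2 u n).pay1) ∧
    ((∀ m : ℕ, (kI : ℤ) + energy w tb f1 f2 u m ≠ 0) →
      ∀ n : ℕ, (kI : ℝ) + (energy w tb f1 f2 u n : ℝ) ≤ N - bMax G u Wf) :=
  mp_min_invariant_general G w u Wf hW hWu kI N hN B hB f1 hbid hmove f2 hf2 tb
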